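/- arXiv:1501.00710 — 2 statements merged into one kernel-verified Lean document; each statement's English description precedes it below -/
import Mathlib

section
/- Let λ and ν be partitions with λ ⊆ νᵗ. Then Σ_μ r_{μλ} · f^{μᵗ}_ν = P^{λ}_{νᵗ}, where the sum is over all partitions μ with λ ⊆ μ and μᵗ ⊆ ν; that is, the number of pairs consisting of a strictly elegant filling of μ/λ and an elegant filling of ν/μᵗ, summed over all such intermediate partitions μ, equals the number of restricted plane partitions of νᵗ/λ (equivalently, by transposing, of ν/λᵗ). -/
open scoped BigOperators

noncomputable section

/-- Formal power series in variables `x_v`, `v : ℕ` (only `v ≥ 1` is used;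
these represent `x_1, x_2, …`). -/
abbrev PS := MvPowerSeries ℕ ℤ

/-- Indicator: `x` if `P` holds, `0` otherwise. -/
def indic {M : Type*} [Zero M] (P : Prop) (x : M) : M :=
  @ite M P (Classical.propDecidable P) x 0

/-- Total degree of a monomial. -/
def degOf (d : ℕ →₀ ℕ) : ℕ := d.sum fun _ k => k

/-- Substitution of `-x_v` for `x_v` in a power series. -/
def negx (f : PS) : PS := fun d => (-1 : ℤ) ^ degOf d * f d

/-- Homogeneous component of degree `m`. -/
def homogComp (m : ℕ) (f : PS) : PS := fun d => if degOf d = m then f d else 0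

/-! ### Compositions -/

/-- A composition is a finite list of positive integers. -/
def IsComposition (l : List ℕ) : Prop := ∀ x ∈ l, 0 < x

/-- Descent composition `C(w)` of a word with no two equal adjacent letters:
lengths of the maximal ascending runs. -/
def descComp : List ℕ → List ℕ
  | [] => []
  | a :: t =>
    match descComp t, t with
    | _, [] => [1]
    | c :: cs, b :: _ => if b < a then 1 :: c :: cs else (c + 1) :: cs
    | [], _ :: _ => []

/-- Proper partial sums `S_α = {α₁, α₁+α₂, …} ⊆ [n-1]` of a composition. -/
def partialSums (l : List ℕ) : Finset ℕ :=
  ((List.range (l.length - 1)).map fun k => (l.take (k + 1)).sum).toFinset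

def diffList (n : ℕ) : List ℕ → ℕ → List ℕ
  | [], prev => [n - prev]
  | s :: t, prev => (s - prev) :: diffList n t s

/-- Composition `C(S)` of `n` associated to a subset `S = {s₁<…<s_k} ⊆ [n-1]`:
`(s₁, s₂-s₁, …, n-s_k)`. -/
def compOfFinset (n : ℕ) (S : Finset ℕ) : List ℕ :=
  if n = 0 then [] else diffList n (S.sort (· ≤ ·)) 0

/-- `ω(α)`: the unique composition of `n` with `S_{ω(α)} = [n-1] \ S_{rev(α)}`. -/
def omegaC (α : List ℕ) : List ℕ :=
  compOfFinset α.sum ((Finset.Icc 1 (α.sum - 1)) \ partialSums α.reverse)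

/-- A canonical word (permutation of `[n]`) with descent composition `α`. -/
def canonWord : List ℕ → List ℕ
  | [] => []
  | a :: t => (List.range' (t.sum + 1) a) ++ canonWord t

/-! ### Ribbons and mergings -/

/-- The step word of the ribbon of a composition: rows bottom-to-top, a `false` (horizontal
step) between consecutive boxes of a row, a `true` (vertical step) between rows. -/
def ribbonSteps : List ℕ → List Bool
  | [] => []
  | [a] => List.replicate (a - 1) false
  | a :: b :: t => List.replicate (a - 1) false ++ true :: ribbonSteps (b :: t)

/-- Number of subsets of positions of `l` at which the subsequence of `l` equals `p`. -/
def countSubseq : List Bool → List Bool → ℕ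
  | _, [] => 1
  | [], _ :: _ => 0
  | a :: t, b :: p => (if a = b then countSubseq t p else 0) + countSubseq t (b :: p)

/-- `M_{α,β}`: the number of mergings of ribbon `α` resulting in ribbon `β`, i.e. the number
of ways to partition the boxes of `α` into consecutive blocks so that the steps joining
consecutive blocks form the step word of `β`. -/
def mergeCount (a b : List ℕ) : ℕ :=
  if a = [] then (if b = [] then 1 else 0)
  else if b = [] then 0
  else countSubseq (ribbonSteps a) (ribbonSteps b)

/-! ### Labeled posets and their generating functions -/

section Posets

variable {P : Type*} [PartialOrder P]

/-- `a ≤ b` for finite sets: `max a ≤ min b`. -/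
def fsLE (a b : Finset ℕ) : Prop := ∀ x ∈ a, ∀ y ∈ b, x ≤ y
/-- `a < b` for finite sets: `max a < min b`. -/
def fsLT (a b : Finset ℕ) : Prop := ∀ x ∈ a, ∀ y ∈ b, x < y
/-- `a ≤ b` for multisets: `max a ≤ min b`. -/
def msLE (a b : Multiset ℕ) : Prop := ∀ x ∈ a, ∀ y ∈ b, x ≤ y
/-- `a < b` for multisets: `max a < min b`. -/
def msLT (a b : Multiset ℕ) : Prop := ∀ x ∈ a, ∀ y ∈ b, x < y

/-- `(P,θ)`-set-valued partition: nonempty finite sets of positive integers on the elements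
of `P`, weakly increasing along coverings labeled increasingly, strictly otherwise. -/
def IsSVP (θ : P → ℕ) (σ : P → Finset ℕ) : Prop :=
  (∀ p, (σ p).Nonempty) ∧ (∀ p, ∀ x ∈ σ p, 0 < x) ∧
  ∀ s t : P, s ⋖ t → (θ s < θ t → fsLE (σ s) (σ t)) ∧ (θ t < θ s → fsLT (σ s) (σ t))

/-- `(P,θ)`-multiset-valued partition. -/
def IsMSVP (θ : P → ℕ) (σ : P → Multiset ℕ) : Prop :=
  (∀ p, σ p ≠ 0) ∧ (∀ p, ∀ x ∈ σ p, 0 < x) ∧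
  ∀ s t : P, s ⋖ t → (θ s < θ t → msLE (σ s) (σ t)) ∧ (θ t < θ s → msLT (σ s) (σ t))

/-- Ordinary `(P,θ)`-partition. -/
def IsOrdP (θ : P → ℕ) (σ : P → ℕ) : Prop :=
  (∀ p, 0 < σ p) ∧
  ∀ s t : P, s ⋖ t → (θ s < θ t → σ s ≤ σ t) ∧ (θ t < θ s → σ s < σ t)

/-- `K̃_{P,θ}`: generating function of `(P,θ)`-set-valued partitions. -/
def KtildeP (θ : P → ℕ) : PS := fun d =>
  (Set.ncard {σ : P → Finset ℕ |
    IsSVP θ σ ∧ ∀ v, Set.ncard {p : P | v ∈ σ p} = d v} : ℤ)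

/-- `K̂_{P,θ}`: generating function of `(P,θ)`-multiset-valued partitions. -/
def KhatP [Fintype P] (θ : P → ℕ) : PS := fun d =>
  (Set.ncard {σ : P → Multiset ℕ |
    IsMSVP θ σ ∧ ∀ v, (∑ p : P, (σ p).count v) = d v} : ℤ)

/-- Generating function of ordinary `(P,θ)`-partitions. -/
def KordP (θ : P → ℕ) : PS := fun d =>
  (Set.ncard {σ : P → ℕ |
    IsOrdP θ σ ∧ ∀ v, Set.ncard {p : P | σ p = v} = d v} : ℤ)

/-- Linear multi-extension of `P` by `[N]`. -/
def IsLME (N : ℕ) (e : P → Finset (Fin N)) : Prop :=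
  (∀ x y : P, x < y → ∀ a ∈ e x, ∀ b ∈ e y, (a : ℕ) < (b : ℕ)) ∧
  (∀ i : Fin N, ∃! x : P, i ∈ e x) ∧
  (∀ x : P, ∀ a ∈ e x, ∀ b ∈ e x, (a : ℕ) + 1 ≠ (b : ℕ))

/-- `w ∈ J̃_N(P,θ)`: `w` is the word `θ(e⁻¹(1))⋯θ(e⁻¹(N))` of some linear
multi-extension `e` of `P` by `[N]`. -/
def InJtilde (θ : P → ℕ) (N : ℕ) (w : List ℕ) : Prop :=
  w.length = N ∧ ∃ e : P → Finset (Fin N), IsLME N e ∧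
    ∀ (i : Fin N) (x : P), i ∈ e x → w.getD (i : ℕ) 0 = θ x

end Posets

/-- The chain `c₁ < ⋯ < c_k` labeled by the word `w`. -/
def chainTheta (w : List ℕ) : Fin w.length → ℕ := fun j => w.get j

/-- Multi-fundamental quasisymmetric function `L̃_α`. -/
def Ltilde (α : List ℕ) : PS := KtildeP (chainTheta (canonWord α))

/-- `L̂_α`, defined from multiset-valued chain partitions. -/
def Lhat (α : List ℕ) : PS := KhatP (chainTheta (canonWord α))

/-- Fundamental quasisymmetric function `L_α`. -/
def Lfun (α : List ℕ) : PS := KordP (chainTheta (canonWord α))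

/-- The word on the alphabet `[n] = {1,…,n}` encoded by `f : Fin N → Fin n`. -/
def wordOf {N n : ℕ} (f : Fin N → Fin n) : List ℕ := List.ofFn fun j => ((f j : ℕ) + 1)

/-! ### Multiwords, multishuffles, permutation words -/

/-- `w` is a multiword of `a`. -/
def IsMultiword (w a : List ℕ) : Prop :=
  ∃ t : Fin w.length → Fin a.length, Monotone t ∧ Function.Surjective t ∧
    ∀ j : Fin w.length, w.get j = a.get (t j)

/-- `w` is a multishuffle of `a` and `b` (for `a`, `b` with distinct letters from
disjoint alphabets). -/
def IsMultishuffle (w a b : List ℕ) : Prop :=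
  List.Chain' (· ≠ ·) w ∧ (∀ x ∈ w, x ∈ a ∨ x ∈ b) ∧
  IsMultiword (w.filter fun x => decide (x ∈ a)) a ∧
  IsMultiword (w.filter fun x => decide (x ∈ b)) b

/-- `v[n]`: add `n` to every letter. -/
def shiftWord (n : ℕ) (v : List ℕ) : List ℕ := v.map (· + n)

/-- The increasing word `1 2 ⋯ n`. -/
def idWord (n : ℕ) : List ℕ := List.range' 1 n

/-- `w` is (the word of) a permutation of `[w.length]`. -/
def IsPermWord (w : List ℕ) : Prop := w.Nodup ∧ ∀ x ∈ w, 1 ≤ x ∧ x ≤ w.length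

/-- All permutation words of `[i]`. -/
def permWords (i : ℕ) : Finset (List ℕ) := (List.permutations (idWord i)).toFinset

/-- All permutation words of `[i]` for `i ≤ N`. -/
def allPerms (N : ℕ) : Finset (List ℕ) := (Finset.range (N + 1)).biUnion permWords

/-! ### MNSym -/

/-- The free ℤ-module with basis indexed by compositions (as lists). -/
abbrev MNSym := List ℕ →₀ ℤ

/-- Basis element `R̃_α`. -/
def Rt (a : List ℕ) : MNSym := Finsupp.single a 1

/-- `R̃_α • R̃_β = R̃_{α◁β} + R̃_{α·β} + R̃_{α▷β}` on basis elements, with `R̃_∅ = 1` the unit. -/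
def basisMul (a b : List ℕ) : MNSym :=
  if a = [] then Rt b
  else if b = [] then Rt a
  else Rt (a ++ b) + Rt (a.dropLast ++ (a.getLastD 0 + b.headD 0 - 1) :: b.tail)
    + Rt (a.dropLast ++ (a.getLastD 0 + b.headD 0) :: b.tail)

/-- The bilinear product `•` of `MNSym`. -/
def mnMul (x y : MNSym) : MNSym :=
  x.sum fun a ca => y.sum fun b cb => (ca * cb) • basisMul a b

/-! ### Shapes and tableaux -/

/-- Box `b = (i,j)` (row `i`, column `j`, both 0-indexed) belongs to the Young diagram
of `l`. -/
def InShape (l : List ℕ) (b : ℕ × ℕ) : Prop := b.1 < l.length ∧ b.2 < l.getD b.1 0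

/-- A partition: a weakly decreasing list of positive integers. -/
def IsPartition (l : List ℕ) : Prop := (∀ x ∈ l, 0 < x) ∧ l.Pairwise (· ≥ ·)

/-- Shape containment `μ ⊆ l`. -/
def subShape (μ l : List ℕ) : Prop := ∀ i, μ.getD i 0 ≤ l.getD i 0

/-- Conjugate (transpose) partition. -/
def conj (l : List ℕ) : List ℕ :=
  (List.range (l.headD 0)).map fun j => l.countP fun a => decide (j < a)

/-- The boxes of the Young diagram of `l`, as a finset. -/
def shapeFinset (l : List ℕ) : Finset (ℕ × ℕ) :=
  ((Finset.range l.length).sigma fun i => Finset.range (l.getD i 0)).image fun p => (p.1, p.2)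

theorem mem_shapeFinset (l : List ℕ) (b : ℕ × ℕ) : b ∈ shapeFinset l ↔ InShape l b := by
  simp only [shapeFinset, Finset.mem_image, Finset.mem_sigma, Finset.mem_range, InShape]
  constructor
  · rintro ⟨⟨i, j⟩, ⟨hi, hj⟩, rfl⟩; exact ⟨hi, hj⟩
  · rintro ⟨h1, h2⟩; exact ⟨⟨b.1, b.2⟩, ⟨h1, h2⟩, rfl⟩

/-- Box `b` lies in the skew shape `l/μ`. -/
def Skew (μ l : List ℕ) (b : ℕ × ℕ) : Prop := InShape l b ∧ ¬ InShape μ b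

/-- Set-valued tableau of shape `l`: nonempty finite sets of positive integers, rows
weakly increasing, columns strictly increasing. -/
def IsSVT (l : List ℕ) (T : ℕ × ℕ → Finset ℕ) : Prop :=
  (∀ b, ¬ InShape l b → T b = ∅) ∧
  (∀ b, InShape l b → (T b).Nonempty ∧ ∀ x ∈ T b, 0 < x) ∧
  (∀ i j, InShape l (i, j + 1) → fsLE (T (i, j)) (T (i, j + 1))) ∧
  (∀ i j, InShape l (i + 1, j) → fsLT (T (i, j)) (T (i + 1, j)))

/-- The stable Grothendieck polynomial `G_λ = Σ_T (-1)^{|T|-|λ|} x^T`. -/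
def Gpoly (l : List ℕ) : PS := fun d =>
  ((-1 : ℤ)) ^ (degOf d + l.sum) *
    (Set.ncard {T : ℕ × ℕ → Finset ℕ |
      IsSVT l T ∧ ∀ v, Set.ncard {b : ℕ × ℕ | v ∈ T b} = d v} : ℤ)

/-- `K̃_λ`, defined directly as the generating function of set-valued tableaux. -/
def KtilTab (l : List ℕ) : PS := fun d =>
  (Set.ncard {T : ℕ × ℕ → Finset ℕ |
    IsSVT l T ∧ ∀ v, Set.ncard {b : ℕ × ℕ | v ∈ T b} = d v} : ℤ)

/-- Weak set-valued tableau of shape `l`: nonempty finite multisets of positive integers,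
rows strictly increasing, columns weakly increasing. -/
def IsWSVT (l : List ℕ) (T : ℕ × ℕ → Multiset ℕ) : Prop :=
  (∀ b, ¬ InShape l b → T b = 0) ∧
  (∀ b, InShape l b → T b ≠ 0 ∧ ∀ x ∈ T b, 0 < x) ∧
  (∀ i j, InShape l (i, j + 1) → msLT (T (i, j)) (T (i, j + 1))) ∧
  (∀ i j, InShape l (i + 1, j) → msLE (T (i, j)) (T (i + 1, j)))

/-- `J_λ`: the weight generating function of weak set-valued tableaux of shape `λ`. -/
def Jpoly (l : List ℕ) : PS := fun d =>
  (Set.ncard {T : ℕ × ℕ → Multiset ℕ |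
    IsWSVT l T ∧ ∀ v, (∑ b ∈ shapeFinset l, (T b).count v) = d v} : ℤ)

/-- Semistandard Young tableau of shape `l`. -/
def IsSSYT (l : List ℕ) (T : ℕ × ℕ → ℕ) : Prop :=
  (∀ b, ¬ InShape l b → T b = 0) ∧
  (∀ b, InShape l b → 0 < T b) ∧
  (∀ i j, InShape l (i, j + 1) → T (i, j) ≤ T (i, j + 1)) ∧
  (∀ i j, InShape l (i + 1, j) → T (i, j) < T (i + 1, j))

/-- The Schur function `s_λ`. -/
def schur (l : List ℕ) : PS := fun d =>
  (Set.ncard {T : ℕ × ℕ → ℕ |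
    IsSSYT l T ∧ ∀ v, Set.ncard {b : ℕ × ℕ | InShape l b ∧ T b = v} = d v} : ℤ)

/-- Reverse plane partition of shape `l`. -/
def IsRevPP (l : List ℕ) (T : ℕ × ℕ → ℕ) : Prop :=
  (∀ b, ¬ InShape l b → T b = 0) ∧
  (∀ b, InShape l b → 0 < T b) ∧
  (∀ i j, InShape l (i, j + 1) → T (i, j) ≤ T (i, j + 1)) ∧
  (∀ i j, InShape l (i + 1, j) → T (i, j) ≤ T (i + 1, j))

/-- The dual stable Grothendieck polynomial `g_λ`; the exponent of `x_v` is the number of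
columns containing `v`. -/
def gpoly (l : List ℕ) : PS := fun d =>
  (Set.ncard {T : ℕ × ℕ → ℕ |
    IsRevPP l T ∧ ∀ v, Set.ncard {j : ℕ | ∃ i, InShape l (i, j) ∧ T (i, j) = v} = d v} : ℤ)

/-- Valued-set tableau of shape `l`: a filling `F` whose transpose is semistandard
(rows strictly increasing, columns weakly increasing), together with a decomposition into
groups encoded by the marking `g` of the top box of each group (groups are contiguous runs
within a column; unmarked boxes carry the same value as the box above). -/
def IsVST (l : List ℕ) (F : ℕ × ℕ → ℕ) (g : ℕ × ℕ → Bool) : Prop :=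
  (∀ b, ¬ InShape l b → F b = 0 ∧ g b = false) ∧
  (∀ b, InShape l b → 0 < F b) ∧
  (∀ i j, InShape l (i, j + 1) → F (i, j) < F (i, j + 1)) ∧
  (∀ i j, InShape l (i + 1, j) → F (i, j) ≤ F (i + 1, j)) ∧
  (∀ j, InShape l (0, j) → g (0, j) = true) ∧
  (∀ i j, InShape l (i + 1, j) → g (i + 1, j) = false → F (i + 1, j) = F (i, j))

/-- `j_λ`: the weight generating function of valued-set tableaux; the exponent of `x_v` is
the number of groups with entry `v`. -/
def jpoly (l : List ℕ) : PS := fun d =>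
  (Set.ncard {Fg : (ℕ × ℕ → ℕ) × (ℕ × ℕ → Bool) |
    IsVST l Fg.1 Fg.2 ∧
    ∀ v, Set.ncard {b : ℕ × ℕ | InShape l b ∧ Fg.2 b = true ∧ Fg.1 b = v} = d v} : ℤ)

/-- `b` is an outer corner of `μ`: `μ ∪ {b}` is again a Young diagram. -/
def OuterCorner (μ : List ℕ) (b : ℕ × ℕ) : Prop :=
  b.1 ≤ μ.length ∧ b.2 = μ.getD b.1 0 ∧ (b.1 = 0 ∨ b.2 < μ.getD (b.1 - 1) 0)

/-- `h(b)`: the number of boxes of `μ` above `b` in its column plus the number to its left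
in its row. -/
def hBox (μ : List ℕ) (b : ℕ × ℕ) : ℕ :=
  ((Finset.range b.1).filter fun i => b.2 < μ.getD i 0 ∧ i < μ.length).card +
  ((Finset.range b.2).filter fun j => j < μ.getD b.1 0 ∧ b.1 < μ.length).card

/-- Restricted plane partition of `l/μ`. -/
def IsRPP (μ l : List ℕ) (F : ℕ × ℕ → ℕ) : Prop :=
  (∀ b, ¬ Skew μ l b → F b = 0) ∧
  (∀ b, Skew μ l b → 0 < F b) ∧
  (∀ i j, Skew μ l (i, j) → Skew μ l (i, j + 1) → F (i, j + 1) ≤ F (i, j)) ∧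
  (∀ i j, Skew μ l (i, j) → Skew μ l (i + 1, j) → F (i + 1, j) ≤ F (i, j)) ∧
  (∀ b, Skew μ l b → OuterCorner μ b → F b ≤ hBox μ b)

/-- `P^μ_λ`: the number of restricted plane partitions of `λ/μ` (`0` if `μ ⊄ λ`,
and `1` if `μ = λ`). -/
def Pnum (μ l : List ℕ) : ℕ :=
  indic (subShape μ l) (Set.ncard {F : ℕ × ℕ → ℕ | IsRPP μ l F})

/-- Elegant filling of `l/μ`: semistandard, entries in (0-indexed) row `i` lie in `[1,i]`. -/
def IsElegant (μ l : List ℕ) (F : ℕ × ℕ → ℕ) : Prop :=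
  (∀ b, ¬ Skew μ l b → F b = 0) ∧
  (∀ b, Skew μ l b → 1 ≤ F b ∧ F b ≤ b.1) ∧
  (∀ i j, Skew μ l (i, j) → Skew μ l (i, j + 1) → F (i, j) ≤ F (i, j + 1)) ∧
  (∀ i j, Skew μ l (i, j) → Skew μ l (i + 1, j) → F (i, j) < F (i + 1, j))

/-- Strictly elegant filling of `l/μ`: elegant with both rows and columns strictly
increasing. -/
def IsStrictElegant (μ l : List ℕ) (F : ℕ × ℕ → ℕ) : Prop :=
  (∀ b, ¬ Skew μ l b → F b = 0) ∧
  (∀ b, Skew μ l b → 1 ≤ F b ∧ F b ≤ b.1) ∧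
  (∀ i j, Skew μ l (i, j) → Skew μ l (i, j + 1) → F (i, j) < F (i, j + 1)) ∧
  (∀ i j, Skew μ l (i, j) → Skew μ l (i + 1, j) → F (i, j) < F (i + 1, j))

/-- `f^μ_λ`: the number of elegant fillings of `λ/μ`. -/
def fENum (μ l : List ℕ) : ℕ := Set.ncard {F : ℕ × ℕ → ℕ | IsElegant μ l F}

/-- `r_{λμ}`: the number of strictly elegant fillings of `λ/μ`. -/
def rENum (μ l : List ℕ) : ℕ := Set.ncard {F : ℕ × ℕ → ℕ | IsStrictElegant μ l F}

/-! ### The box poset of a partition -/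

/-- The poset of boxes of the Young diagram of `l` (componentwise order: each box is
covered by the box to its right and the box below it). -/
def BoxP (l : List ℕ) : Type := {b : ℕ × ℕ // InShape l b}

instance (l : List ℕ) : PartialOrder (BoxP l) :=
  inferInstanceAs (PartialOrder {b : ℕ × ℕ // InShape l b})

instance (l : List ℕ) : Fintype (BoxP l) :=
  Fintype.subtype (shapeFinset l) (mem_shapeFinset l)

/-- The row-reading labeling `θ_s` of the boxes: bottom row first, left to right. -/
def rowLabel (l : List ℕ) : BoxP l → ℕ := fun b => (l.drop (b.1.1 + 1)).sum + b.1.2 + 1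

/-! ### i-extensions -/

/-- `|T(D,E)|`: the number of `i`-extensions of `D ⊆ [n-1]` to `E ⊆ [n+i-1]`, i.e. injective
order-preserving maps `t : [n-1] → [n+i-1]` (encoded on `Fin (n-1)` via `j ↦ j+1`) with
`t(D) ⊆ E` and `E \ t(D) = [n+i-1] \ t([n-1])`. -/
def iExtCount (n i : ℕ) (D E : Finset ℕ) : ℕ :=
  Set.ncard {t : Fin (n - 1) → ℕ |
    StrictMono t ∧ (∀ j, t j ∈ Finset.Icc 1 (n + i - 1)) ∧
    (∀ j : Fin (n - 1), (j : ℕ) + 1 ∈ D → t j ∈ E) ∧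
    E \ Finset.image t (Finset.univ.filter fun j : Fin (n - 1) => (j : ℕ) + 1 ∈ D)
      = Finset.Icc 1 (n + i - 1) \ Finset.image t Finset.univ}

/-! Write `κ = νᵗ`. A restricted plane partition `F` of `κ/λ` is cut along the boxes with
`j < F (i, j)`: together with `λ` they form a partition `μ` (as `F` decreases along rows and
columns), `S (i, j) = i + j + 1 - F (i, j)` is a strictly elegant filling of `μ/λ`, and
`E (j, i) = j + 1 - F (i, j)` is an elegant filling of `ν/μᵗ`; the construction is invertible.
Two inequalities make it work. Walking left or up from any box of `κ/λ` reaches an outer corner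
of `λ`, where `F ≤ h(b) ≤ i + j`; hence `F (i, j) ≤ i + j` everywhere and `S ≥ 1`. Conversely,
if `a` boxes of `λ` lie above an outer corner `b = (i, j)` of `λ` inside `μ`, the `i - a` boxes
of `μ/λ` above `b` in its column force `S b > i - a` by column strictness, which is exactly
`F b ≤ a + j = h(b)`. -/

theorem List.lt_length_of_getD_pos {p : List ℕ} {i : ℕ} (h : 0 < p.getD i 0) : i < p.length := by
  by_contra hi
  rw [List.getD_eq_default _ _ (not_lt.mp hi)] at h
  exact h.false

theorem inShape_iff_lt_getD {p : List ℕ} {i j : ℕ} : InShape p (i, j) ↔ j < p.getD i 0 :=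
  ⟨And.right, fun h => ⟨List.lt_length_of_getD_pos ((Nat.zero_le j).trans_lt h), h⟩⟩

theorem subShape_iff_inShape {p q : List ℕ} :
    subShape p q ↔ ∀ i j, InShape p (i, j) → InShape q (i, j) := by
  simp only [inShape_iff_lt_getD]
  exact forall_congr' fun i => ⟨fun h _ hj => hj.trans_le h, le_of_forall_lt⟩

theorem subShape.inShape {p q : List ℕ} (hs : subShape p q) {i j : ℕ} (h : InShape p (i, j)) :
    InShape q (i, j) :=
  subShape_iff_inShape.mp hs i j h

theorem length_conj (p : List ℕ) : (conj p).length = p.getD 0 0 := by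
  cases p <;> simp [conj]

namespace IsPartition

variable {p q : List ℕ}

theorem tail {a : ℕ} (h : IsPartition (a :: p)) : IsPartition p :=
  ⟨fun x hx => h.1 x (List.mem_cons_of_mem a hx), (List.pairwise_cons.mp h.2).2⟩

theorem getD_antitone (hp : IsPartition p) : Antitone fun i => p.getD i 0 := by
  intro i i' h
  show p.getD i' 0 ≤ p.getD i 0
  by_cases hi' : i' < p.length
  · rw [List.getD_eq_getElem _ _ hi', List.getD_eq_getElem _ _ (h.trans_lt hi')]
    rcases h.eq_or_lt with rfl | hlt
    · exact le_rfl
    · exact List.pairwise_iff_getElem.mp hp.2 i i' _ hi' hlt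
  · rw [List.getD_eq_default _ _ (not_lt.mp hi')]
    exact Nat.zero_le _

theorem getD_pos_iff (hp : IsPartition p) {i : ℕ} : 0 < p.getD i 0 ↔ i < p.length :=
  ⟨List.lt_length_of_getD_pos, fun h => by
    rw [List.getD_eq_getElem _ _ h]; exact hp.1 _ (List.getElem_mem h)⟩

theorem ext (hp : IsPartition p) (hq : IsPartition q) (h : ∀ i, p.getD i 0 = q.getD i 0) :
    p = q := by
  have hlen : p.length = q.length :=
    eq_of_forall_lt_iff fun i => by rw [← hp.getD_pos_iff, ← hq.getD_pos_iff, h]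
  refine List.ext_getElem hlen fun i h₁ h₂ => ?_
  have := h i
  rwa [List.getD_eq_getElem _ _ h₁, List.getD_eq_getElem _ _ h₂] at this

theorem inShape_of_le (hp : IsPartition p) {i j i' j' : ℕ} (h : InShape p (i, j))
    (hi : i' ≤ i) (hj : j' ≤ j) : InShape p (i', j') := by
  rw [inShape_iff_lt_getD] at h ⊢
  have : p.getD i 0 ≤ p.getD i' 0 := hp.getD_antitone hi
  omega

theorem length_le_of_subShape (hp : IsPartition p) (hs : subShape p q) :
    p.length ≤ q.length := by
  rcases Nat.eq_zero_or_pos p.length with h | h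
  · omega
  · have := (hs.inShape (inShape_iff_lt_getD.mpr (hp.getD_pos_iff.mpr (by omega) :
      0 < p.getD (p.length - 1) 0))).1
    omega

theorem lt_countP_iff (hp : IsPartition p) (r j : ℕ) :
    r < p.countP (fun a => decide (j < a)) ↔ InShape p (r, j) := by
  rw [inShape_iff_lt_getD]
  induction p generalizing r with
  | nil => simp
  | cons a t ih =>
    by_cases hja : j < a
    · rw [List.countP_cons_of_pos (by simpa using hja)]
      cases r with
      | zero => simpa using hja
      | succ s => simpa using ih hp.tail s
    · rw [List.countP_eq_zero.mpr fun x hx => ?_]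
      · have := hp.getD_antitone (Nat.zero_le r)
        simp only [List.getD_cons_zero] at this
        omega
      · have : x ≤ a := by
          rcases List.mem_cons.mp hx with rfl | hxt
          · exact le_rfl
          · exact List.rel_of_pairwise_cons hp.2 hxt
        simp only [decide_eq_true_eq]
        omega

theorem getD_conj (hp : IsPartition p) (j : ℕ) :
    (conj p).getD j 0 = p.countP (fun a => decide (j < a)) := by
  by_cases hj : j < p.getD 0 0
  · rw [List.getD_eq_getElem _ _ (by rwa [length_conj])]
    simp [conj]
  · rw [List.getD_eq_default _ _ (by rw [length_conj]; omega), eq_comm, ← Nat.le_zero,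
      ← not_lt, hp.lt_countP_iff, inShape_iff_lt_getD]
    exact hj

theorem inShape_conj (hp : IsPartition p) (a b : ℕ) :
    InShape (conj p) (a, b) ↔ InShape p (b, a) := by
  rw [inShape_iff_lt_getD, hp.getD_conj, hp.lt_countP_iff]

theorem conj (hp : IsPartition p) : IsPartition (_root_.conj p) := by
  constructor
  · intro x hx
    obtain ⟨k, hk, rfl⟩ := List.mem_iff_getElem.mp hx
    rw [length_conj] at hk
    rwa [← List.getD_eq_getElem _ 0 (by rwa [length_conj]), hp.getD_conj, hp.lt_countP_iff,
      inShape_iff_lt_getD]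
  · rw [List.pairwise_iff_getElem]
    intro i j hi hj hij
    rw [← List.getD_eq_getElem _ 0 hi, ← List.getD_eq_getElem _ 0 hj, hp.getD_conj,
      hp.getD_conj]
    exact List.countP_mono_left fun x _ hx => by simp only [decide_eq_true_eq] at hx ⊢; omega

end IsPartition

theorem subShape_conj_iff {μ ν : List ℕ} (hμ : IsPartition μ) (hν : IsPartition ν) :
    subShape (conj μ) ν ↔ subShape μ (conj ν) := by
  simp only [subShape_iff_inShape, hμ.inShape_conj, hν.inShape_conj]
  exact forall_comm

theorem skew_conj_iff {μ ν : List ℕ} (hμ : IsPartition μ) (hν : IsPartition ν) (a b : ℕ) :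
    Skew (conj μ) ν (a, b) ↔ Skew μ (conj ν) (b, a) := by
  rw [Skew, Skew, hμ.inShape_conj, hν.inShape_conj]

theorem hBox_le (l : List ℕ) (b : ℕ × ℕ) : hBox l b ≤ b.1 + b.2 := by
  have h₁ := Finset.card_filter_le (Finset.range b.1) fun i => b.2 < l.getD i 0 ∧ i < l.length
  have h₂ := Finset.card_filter_le (Finset.range b.2) fun j => j < l.getD b.1 0 ∧ b.1 < l.length
  rw [Finset.card_range] at h₁ h₂
  unfold hBox
  omega

theorem exists_skew_left_or_above_of_not_outerCorner {l κ : List ℕ} (hκ : IsPartition κ)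
    {i j : ℕ} (hsk : Skew l κ (i, j)) (hc : ¬ OuterCorner l (i, j)) :
    (∃ j', j = j' + 1 ∧ Skew l κ (i, j')) ∨ (∃ i', i = i' + 1 ∧ Skew l κ (i', j)) := by
  have hj : l.getD i 0 ≤ j := not_lt.mp (mt inShape_iff_lt_getD.mpr hsk.2)
  rcases hj.lt_or_eq with hj | hj
  · obtain ⟨j', rfl⟩ : ∃ j', j = j' + 1 := Nat.exists_eq_add_one.mpr (by omega)
    refine Or.inl ⟨j', rfl, hκ.inShape_of_le hsk.1 le_rfl (Nat.le_succ j'), ?_⟩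
    rw [inShape_iff_lt_getD]
    omega
  · have hi : i ≠ 0 ∧ l.getD (i - 1) 0 ≤ j := by
      simp only [OuterCorner, not_and, not_or, not_lt] at hc
      by_cases hil : i ≤ l.length
      · exact hc hil hj.symm
      · exact ⟨by omega, by rw [List.getD_eq_default _ _ (by omega)]; exact Nat.zero_le _⟩
    obtain ⟨i', rfl⟩ : ∃ i', i = i' + 1 := Nat.exists_eq_add_one.mpr (by omega)
    refine Or.inr ⟨i', rfl, hκ.inShape_of_le hsk.1 (Nat.le_succ i') le_rfl, ?_⟩
    rw [inShape_iff_lt_getD]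
    simpa using hi.2

namespace IsRPP

variable {l κ : List ℕ} {F : ℕ × ℕ → ℕ}

theorem antitone_row (hl : IsPartition l) (hκ : IsPartition κ) (hF : IsRPP l κ F) {i j j' : ℕ}
    (hjj' : j ≤ j') (hsk : Skew l κ (i, j)) (hsk' : Skew l κ (i, j')) : F (i, j') ≤ F (i, j) := by
  induction j', hjj' using Nat.le_induction with
  | base => exact le_rfl
  | succ t hjt ih =>
    have hskt : Skew l κ (i, t) := ⟨hκ.inShape_of_le hsk'.1 le_rfl (Nat.le_succ t),
      fun hc => hsk.2 (hl.inShape_of_le hc le_rfl hjt)⟩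
    exact (hF.2.2.1 i t hskt hsk').trans (ih hskt)

theorem le_add (hκ : IsPartition κ) (hF : IsRPP l κ F) {i j : ℕ}
    (hsk : Skew l κ (i, j)) : F (i, j) ≤ i + j := by
  induction hn : i + j using Nat.strong_induction_on generalizing i j with
  | _ n ih =>
    by_cases hc : OuterCorner l (i, j)
    · exact hn ▸ (hF.2.2.2.2 _ hsk hc).trans (hBox_le l _)
    rcases exists_skew_left_or_above_of_not_outerCorner hκ hsk hc with
      ⟨j', rfl, hsk'⟩ | ⟨i', rfl, hsk'⟩
    · have := hF.2.2.1 i j' hsk' hsk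
      have := ih _ (by omega) hsk' rfl
      omega
    · have := hF.2.2.2.1 i' j hsk' hsk
      have := ih _ (by omega) hsk' rfl
      omega

end IsRPP

section CutShape

variable {l κ : List ℕ} {F : ℕ × ℕ → ℕ}

def cutRow (l κ : List ℕ) (F : ℕ × ℕ → ℕ) (i : ℕ) : ℕ :=
  max (l.getD i 0) ((Finset.range (κ.getD i 0)).sup fun j => if j < F (i, j) then j + 1 else 0)

theorem lt_cutRow_iff (hl : IsPartition l) (hκ : IsPartition κ) (hF : IsRPP l κ F) {i j : ℕ} :
    j < cutRow l κ F i ↔ InShape l (i, j) ∨ (InShape κ (i, j) ∧ j < F (i, j)) := by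
  simp only [cutRow, lt_max_iff, Finset.lt_sup_iff, Finset.mem_range, inShape_iff_lt_getD]
  constructor
  · rintro (hjl | ⟨j', hj', hjj'⟩)
    · exact Or.inl hjl
    by_cases hjl : j < l.getD i 0
    · exact Or.inl hjl
    split_ifs at hjj' with hF'
    · have hsk' : Skew l κ (i, j') := by
        by_contra hc
        rw [hF.1 _ hc] at hF'
        omega
      have hsk : Skew l κ (i, j) := ⟨hκ.inShape_of_le hsk'.1 le_rfl (by omega),
        fun hc => hjl (inShape_iff_lt_getD.mp hc)⟩
      have := hF.antitone_row hl hκ (by omega) hsk hsk'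
      exact Or.inr ⟨by omega, by omega⟩
    · omega
  · rintro (hjl | hj)
    · exact Or.inl hjl
    · exact Or.inr ⟨j, hj.1, by simp [hj.2]⟩

theorem cutRow_succ_le (hl : IsPartition l) (hκ : IsPartition κ) (hF : IsRPP l κ F) (i : ℕ) :
    cutRow l κ F (i + 1) ≤ cutRow l κ F i := by
  refine le_of_forall_lt fun j hj => ?_
  rw [lt_cutRow_iff hl hκ hF] at hj ⊢
  by_cases hup : InShape l (i, j)
  · exact Or.inl hup
  rcases hj with hj | ⟨hj, hFj⟩
  · exact absurd (hl.inShape_of_le hj (Nat.le_succ i) le_rfl) hup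
  have hin : InShape κ (i, j) := hκ.inShape_of_le hj (Nat.le_succ i) le_rfl
  have := hF.2.2.2.1 i j ⟨hin, hup⟩
    ⟨hj, fun hc => hup (hl.inShape_of_le hc (Nat.le_succ i) le_rfl)⟩
  exact Or.inr ⟨hin, by omega⟩

theorem cutRow_antitone (hl : IsPartition l) (hκ : IsPartition κ) (hF : IsRPP l κ F) :
    Antitone (cutRow l κ F) :=
  antitone_nat_of_succ_le (cutRow_succ_le hl hκ hF)

theorem exists_cutRow_eq_zero (l κ : List ℕ) (F : ℕ × ℕ → ℕ) : ∃ n, cutRow l κ F n = 0 :=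
  ⟨l.length + κ.length, by simp [cutRow]⟩

def cutShape (l κ : List ℕ) (F : ℕ × ℕ → ℕ) : List ℕ :=
  (List.range (Nat.find (exists_cutRow_eq_zero l κ F))).map (cutRow l κ F)

theorem getD_cutShape (hl : IsPartition l) (hκ : IsPartition κ) (hF : IsRPP l κ F) (i : ℕ) :
    (cutShape l κ F).getD i 0 = cutRow l κ F i := by
  by_cases hi : i < Nat.find (exists_cutRow_eq_zero l κ F)
  · simp [cutShape, hi]
  · rw [List.getD_eq_default _ _ (by simpa [cutShape] using hi)]
    have := cutRow_antitone hl hκ hF (not_lt.mp hi)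
    rw [Nat.find_spec (exists_cutRow_eq_zero l κ F)] at this
    omega

theorem isPartition_cutShape (hl : IsPartition l) (hκ : IsPartition κ) (hF : IsRPP l κ F) :
    IsPartition (cutShape l κ F) := by
  refine ⟨fun x hx => ?_, ?_⟩
  · obtain ⟨k, hk, rfl⟩ := List.mem_map.mp hx
    exact Nat.pos_of_ne_zero (Nat.find_min (exists_cutRow_eq_zero l κ F) (List.mem_range.mp hk))
  · exact List.pairwise_map.mpr
      (List.pairwise_lt_range.imp fun h => cutRow_antitone hl hκ hF h.le)

theorem inShape_cutShape_iff (hl : IsPartition l) (hκ : IsPartition κ) (hF : IsRPP l κ F)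
    {i j : ℕ} :
    InShape (cutShape l κ F) (i, j) ↔ InShape l (i, j) ∨ (InShape κ (i, j) ∧ j < F (i, j)) := by
  rw [inShape_iff_lt_getD, getD_cutShape hl hκ hF, lt_cutRow_iff hl hκ hF]

theorem subShape_cutShape (hl : IsPartition l) (hκ : IsPartition κ) (hF : IsRPP l κ F) :
    subShape l (cutShape l κ F) :=
  subShape_iff_inShape.mpr fun _ _ h => (inShape_cutShape_iff hl hκ hF).mpr (Or.inl h)

theorem cutShape_subShape (hl : IsPartition l) (hκ : IsPartition κ) (hlκ : subShape l κ)
    (hF : IsRPP l κ F) : subShape (cutShape l κ F) κ :=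
  subShape_iff_inShape.mpr fun _ _ h =>
    ((inShape_cutShape_iff hl hκ hF).mp h).elim hlκ.inShape And.left

end CutShape

open Classical in
def glue (l ν μ : List ℕ) (S E : ℕ × ℕ → ℕ) : ℕ × ℕ → ℕ := fun b =>
  if Skew l μ b then b.1 + b.2 + 1 - S b
  else if Skew μ (conj ν) b then b.2 + 1 - E (b.2, b.1) else 0

open Classical in
def strictPart (l κ : List ℕ) (F : ℕ × ℕ → ℕ) : ℕ × ℕ → ℕ := fun b =>
  if Skew l (cutShape l κ F) b then b.1 + b.2 + 1 - F b else 0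

open Classical in
def elegantPart (l ν : List ℕ) (F : ℕ × ℕ → ℕ) : ℕ × ℕ → ℕ := fun b =>
  if Skew (conj (cutShape l (conj ν) F)) ν b then b.1 + 1 - F (b.2, b.1) else 0

namespace IsRPP

variable {l κ ν : List ℕ} {F : ℕ × ℕ → ℕ}

theorem bounds_of_skew_cutShape (hl : IsPartition l) (hκ : IsPartition κ) (hF : IsRPP l κ F)
    {i j : ℕ} (hsk : Skew l (cutShape l κ F) (i, j)) :
    Skew l κ (i, j) ∧ j < F (i, j) ∧ F (i, j) ≤ i + j := by
  rcases (inShape_cutShape_iff hl hκ hF).mp hsk.1 with h | ⟨h, hF'⟩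
  · exact absurd h hsk.2
  · exact ⟨⟨h, hsk.2⟩, hF', hF.le_add hκ ⟨h, hsk.2⟩⟩

theorem bounds_of_cutShape_skew (hl : IsPartition l) (hκ : IsPartition κ) (hF : IsRPP l κ F)
    {i j : ℕ} (hsk : Skew (cutShape l κ F) κ (i, j)) :
    Skew l κ (i, j) ∧ 0 < F (i, j) ∧ F (i, j) ≤ j := by
  rw [Skew, inShape_cutShape_iff hl hκ hF, not_or, not_and, not_lt] at hsk
  have hsk' : Skew l κ (i, j) := ⟨hsk.1, hsk.2.1⟩
  exact ⟨hsk', hF.2.1 _ hsk', hsk.2.2 hsk.1⟩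

theorem isStrictElegant_strictPart (hl : IsPartition l) (hκ : IsPartition κ)
    (hF : IsRPP l κ F) : IsStrictElegant l (cutShape l κ F) (strictPart l κ F) := by
  refine ⟨fun b hb => if_neg hb, fun ⟨i, j⟩ hsk => ?_, fun i j hsk hsk' => ?_,
    fun i j hsk hsk' => ?_⟩
  · have := hF.bounds_of_skew_cutShape hl hκ hsk
    simp only [strictPart, if_pos hsk]
    omega
  · obtain ⟨h₁, h₁'⟩ := hF.bounds_of_skew_cutShape hl hκ hsk
    obtain ⟨h₂, h₂'⟩ := hF.bounds_of_skew_cutShape hl hκ hsk'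
    have := hF.2.2.1 i j h₁ h₂
    simp only [strictPart, if_pos hsk, if_pos hsk']
    omega
  · obtain ⟨h₁, h₁'⟩ := hF.bounds_of_skew_cutShape hl hκ hsk
    obtain ⟨h₂, h₂'⟩ := hF.bounds_of_skew_cutShape hl hκ hsk'
    have := hF.2.2.2.1 i j h₁ h₂
    simp only [strictPart, if_pos hsk, if_pos hsk']
    omega

theorem isElegant_elegantPart (hl : IsPartition l) (hν : IsPartition ν)
    (hF : IsRPP l (conj ν) F) :
    IsElegant (conj (cutShape l (conj ν) F)) ν (elegantPart l ν F) := by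
  have hκ := hν.conj
  have hμ := isPartition_cutShape hl hκ hF
  refine ⟨fun b hb => if_neg hb, fun ⟨a, b⟩ hsk => ?_, fun a b hsk hsk' => ?_,
    fun a b hsk hsk' => ?_⟩
  · have := hF.bounds_of_cutShape_skew hl hκ ((skew_conj_iff hμ hν a b).mp hsk)
    simp only [elegantPart, if_pos hsk]
    omega
  · obtain ⟨h₁, -, -⟩ := hF.bounds_of_cutShape_skew hl hκ ((skew_conj_iff hμ hν a b).mp hsk)
    obtain ⟨h₂, -, -⟩ := hF.bounds_of_cutShape_skew hl hκ ((skew_conj_iff hμ hν _ _).mp hsk')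
    have := hF.2.2.2.1 b a h₁ h₂
    simp only [elegantPart, if_pos hsk, if_pos hsk']
    omega
  · obtain ⟨h₁, -, h₁'⟩ := hF.bounds_of_cutShape_skew hl hκ ((skew_conj_iff hμ hν a b).mp hsk)
    obtain ⟨h₂, -, -⟩ := hF.bounds_of_cutShape_skew hl hκ ((skew_conj_iff hμ hν _ _).mp hsk')
    have := hF.2.2.1 b a h₁ h₂
    simp only [elegantPart, if_pos hsk, if_pos hsk']
    omega

theorem glue_strictPart_elegantPart (hl : IsPartition l) (hν : IsPartition ν)
    (hF : IsRPP l (conj ν) F) :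
    glue l ν (cutShape l (conj ν) F) (strictPart l (conj ν) F) (elegantPart l ν F) = F := by
  have hκ := hν.conj
  have hμ := isPartition_cutShape hl hκ hF
  funext ⟨i, j⟩
  by_cases h₁ : Skew l (cutShape l (conj ν) F) (i, j)
  · have := hF.bounds_of_skew_cutShape hl hκ h₁
    simp only [glue, strictPart, if_pos h₁]
    omega
  by_cases h₂ : Skew (cutShape l (conj ν) F) (conj ν) (i, j)
  · have := hF.bounds_of_cutShape_skew hl hκ h₂
    simp only [glue, elegantPart, if_neg h₁, if_pos h₂, if_pos ((skew_conj_iff hμ hν j i).mpr h₂)]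
    omega
  · simp only [glue, if_neg h₁, if_neg h₂]
    refine (hF.1 _ fun hsk => ?_).symm
    by_cases hin : InShape (cutShape l (conj ν) F) (i, j)
    · exact h₁ ⟨hin, hsk.2⟩
    · exact h₂ ⟨hsk.1, hin⟩

end IsRPP

theorem IsStrictElegant.lt_apply_add {l μ : List ℕ} {S : ℕ × ℕ → ℕ} (hl : IsPartition l)
    (hμ : IsPartition μ) (hS : IsStrictElegant l μ S) {i j t : ℕ}
    (hsk : Skew l μ (i + t, j)) (hij : ¬ InShape l (i, j)) : t < S (i + t, j) := by
  induction t with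
  | zero => exact hS.2.1 _ hsk |>.1
  | succ t ih =>
    rw [← Nat.add_assoc] at hsk ⊢
    have hsk' : Skew l μ (i + t, j) := ⟨hμ.inShape_of_le hsk.1 (by omega) le_rfl,
      fun h => hij (hl.inShape_of_le h (by omega) le_rfl)⟩
    have := hS.2.2.2 (i + t) j hsk' hsk
    have := ih hsk'
    omega

theorem not_inShape_card_filter_range {l : List ℕ} (hl : IsPartition l) {i j : ℕ}
    (hij : ¬ InShape l (i, j)) :
    ¬ InShape l (((Finset.range i).filter fun r => j < l.getD r 0 ∧ r < l.length).card, j) := by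
  set A := ((Finset.range i).filter fun r => j < l.getD r 0 ∧ r < l.length).card
  intro hA
  have hAi : A < i := by
    have : A ≤ i := (Finset.card_filter_le _ _).trans_eq (Finset.card_range i)
    rcases this.lt_or_eq with h | h
    · exact h
    · exact absurd (h ▸ hA) hij
  have hsub : Finset.range (A + 1) ⊆
      (Finset.range i).filter fun r => j < l.getD r 0 ∧ r < l.length := fun r hr => by
    have hrA := Finset.mem_range_succ_iff.mp hr
    have hrl : InShape l (r, j) := hl.inShape_of_le hA hrA le_rfl
    simp only [Finset.mem_filter, Finset.mem_range]
    exact ⟨by omega, hrl.2, hrl.1⟩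
  have := Finset.card_le_card hsub
  simp only [Finset.card_range] at this
  omega

theorem hBox_of_outerCorner {l : List ℕ} {i j : ℕ} (hcor : OuterCorner l (i, j)) :
    hBox l (i, j) = ((Finset.range i).filter fun r => j < l.getD r 0 ∧ r < l.length).card + j := by
  obtain ⟨hil, hj, -⟩ := hcor
  simp only at hil hj
  unfold hBox
  dsimp only
  rcases hil.lt_or_eq with hil | rfl
  · rw [Finset.filter_true_of_mem (s := Finset.range j)
      fun c hc => ⟨hj ▸ Finset.mem_range.mp hc, hil⟩, Finset.card_range]
  · rw [List.getD_eq_default _ _ le_rfl] at hj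
    simp [hj]

section Glue

variable {l ν μ : List ℕ} {S E : ℕ × ℕ → ℕ}

theorem glue_eq_of_skew_inner (hS : IsStrictElegant l μ S) {i j : ℕ} (hsk : Skew l μ (i, j)) :
    glue l ν μ S E (i, j) = i + j + 1 - S (i, j) ∧ 1 ≤ S (i, j) ∧ S (i, j) ≤ i :=
  ⟨if_pos hsk, hS.2.1 _ hsk⟩

theorem glue_eq_of_skew_outer (hν : IsPartition ν) (hμ : IsPartition μ)
    (hE : IsElegant (conj μ) ν E) {i j : ℕ} (hsk : Skew μ (conj ν) (i, j)) :
    glue l ν μ S E (i, j) = j + 1 - E (j, i) ∧ 1 ≤ E (j, i) ∧ E (j, i) ≤ j := by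
  have : ¬ Skew l μ (i, j) := fun h => hsk.2 h.1
  exact ⟨by simp only [glue, if_neg this, if_pos hsk], hE.2.1 _ ((skew_conj_iff hμ hν j i).mpr hsk)⟩

theorem glue_le_hBox (hl : IsPartition l) (hν : IsPartition ν) (hμ : IsPartition μ)
    (hS : IsStrictElegant l μ S) (hE : IsElegant (conj μ) ν E) {i j : ℕ}
    (hsk : Skew l (conj ν) (i, j)) (hcor : OuterCorner l (i, j)) :
    glue l ν μ S E (i, j) ≤ hBox l (i, j) := by
  rw [hBox_of_outerCorner hcor]
  set A := ((Finset.range i).filter fun r => j < l.getD r 0 ∧ r < l.length).card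
  by_cases hin : InShape μ (i, j)
  · have hAi : A ≤ i := (Finset.card_filter_le _ _).trans_eq (Finset.card_range i)
    have := glue_eq_of_skew_inner (ν := ν) (E := E) hS ⟨hin, hsk.2⟩
    have := hS.lt_apply_add hl hμ (t := i - A)
      (by rw [Nat.add_sub_cancel' hAi]; exact ⟨hin, hsk.2⟩) (not_inShape_card_filter_range hl hsk.2)
    rw [Nat.add_sub_cancel' hAi] at this
    omega
  · have := glue_eq_of_skew_outer (l := l) (S := S) hν hμ hE ⟨hsk.1, hin⟩
    omega

theorem glue_succ_right_le (hν : IsPartition ν) (hμ : IsPartition μ)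
    (hS : IsStrictElegant l μ S) (hE : IsElegant (conj μ) ν E) {i j : ℕ}
    (hsk : Skew l (conj ν) (i, j)) (hsk' : Skew l (conj ν) (i, j + 1)) :
    glue l ν μ S E (i, j + 1) ≤ glue l ν μ S E (i, j) := by
  by_cases hin' : InShape μ (i, j + 1)
  · have hin : InShape μ (i, j) := hμ.inShape_of_le hin' le_rfl (Nat.le_succ j)
    have := hS.2.2.1 i j ⟨hin, hsk.2⟩ ⟨hin', hsk'.2⟩
    have := glue_eq_of_skew_inner (ν := ν) (E := E) hS ⟨hin, hsk.2⟩
    have := glue_eq_of_skew_inner (ν := ν) (E := E) hS ⟨hin', hsk'.2⟩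
    omega
  have hout' : Skew μ (conj ν) (i, j + 1) := ⟨hsk'.1, hin'⟩
  have := glue_eq_of_skew_outer (l := l) (S := S) hν hμ hE hout'
  by_cases hin : InShape μ (i, j)
  · have := glue_eq_of_skew_inner (ν := ν) (E := E) hS ⟨hin, hsk.2⟩
    omega
  · have hout : Skew μ (conj ν) (i, j) := ⟨hsk.1, hin⟩
    have := glue_eq_of_skew_outer (l := l) (S := S) hν hμ hE hout
    have := hE.2.2.2 j i ((skew_conj_iff hμ hν _ _).mpr hout) ((skew_conj_iff hμ hν _ _).mpr hout')
    omega

theorem glue_succ_down_le (hν : IsPartition ν) (hμ : IsPartition μ)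
    (hS : IsStrictElegant l μ S) (hE : IsElegant (conj μ) ν E) {i j : ℕ}
    (hsk : Skew l (conj ν) (i, j)) (hsk' : Skew l (conj ν) (i + 1, j)) :
    glue l ν μ S E (i + 1, j) ≤ glue l ν μ S E (i, j) := by
  by_cases hin' : InShape μ (i + 1, j)
  · have hin : InShape μ (i, j) := hμ.inShape_of_le hin' (Nat.le_succ i) le_rfl
    have := hS.2.2.2 i j ⟨hin, hsk.2⟩ ⟨hin', hsk'.2⟩
    have := glue_eq_of_skew_inner (ν := ν) (E := E) hS ⟨hin, hsk.2⟩
    have := glue_eq_of_skew_inner (ν := ν) (E := E) hS ⟨hin', hsk'.2⟩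
    omega
  have hout' : Skew μ (conj ν) (i + 1, j) := ⟨hsk'.1, hin'⟩
  have := glue_eq_of_skew_outer (l := l) (S := S) hν hμ hE hout'
  by_cases hin : InShape μ (i, j)
  · have := glue_eq_of_skew_inner (ν := ν) (E := E) hS ⟨hin, hsk.2⟩
    omega
  · have hout : Skew μ (conj ν) (i, j) := ⟨hsk.1, hin⟩
    have := glue_eq_of_skew_outer (l := l) (S := S) hν hμ hE hout
    have := hE.2.2.1 j i ((skew_conj_iff hμ hν _ _).mpr hout) ((skew_conj_iff hμ hν _ _).mpr hout')
    omega

theorem isRPP_glue (hl : IsPartition l) (hν : IsPartition ν) (hμ : IsPartition μ)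
    (hlμ : subShape l μ) (hμκ : subShape μ (conj ν)) (hS : IsStrictElegant l μ S)
    (hE : IsElegant (conj μ) ν E) : IsRPP l (conj ν) (glue l ν μ S E) := by
  refine ⟨fun b hb => ?_, fun ⟨i, j⟩ hsk => ?_, fun i j => glue_succ_right_le hν hμ hS hE,
    fun i j => glue_succ_down_le hν hμ hS hE, fun ⟨i, j⟩ => glue_le_hBox hl hν hμ hS hE⟩
  · obtain ⟨i, j⟩ := b
    have h₁ : ¬ Skew l μ (i, j) := fun h => hb ⟨hμκ.inShape h.1, h.2⟩
    have h₂ : ¬ Skew μ (conj ν) (i, j) := fun h => hb ⟨h.1, fun h' => h.2 (hlμ.inShape h')⟩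
    simp only [glue, if_neg h₁, if_neg h₂]
  · by_cases hin : InShape μ (i, j)
    · have := glue_eq_of_skew_inner (ν := ν) (E := E) hS ⟨hin, hsk.2⟩
      omega
    · have := glue_eq_of_skew_outer (l := l) (S := S) hν hμ hE ⟨hsk.1, hin⟩
      omega

theorem cutShape_glue (hl : IsPartition l) (hν : IsPartition ν) (hμ : IsPartition μ)
    (hlμ : subShape l μ) (hμκ : subShape μ (conj ν)) (hS : IsStrictElegant l μ S)
    (hE : IsElegant (conj μ) ν E) : cutShape l (conj ν) (glue l ν μ S E) = μ := by
  have hF := isRPP_glue hl hν hμ hlμ hμκ hS hE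
  refine (isPartition_cutShape hl hν.conj hF).ext hμ fun i => eq_of_forall_lt_iff fun j => ?_
  rw [← inShape_iff_lt_getD, ← inShape_iff_lt_getD, inShape_cutShape_iff hl hν.conj hF]
  by_cases hin : InShape μ (i, j)
  · refine iff_of_true ?_ hin
    by_cases hjl : InShape l (i, j)
    · exact Or.inl hjl
    · have := glue_eq_of_skew_inner (ν := ν) (E := E) hS ⟨hin, hjl⟩
      exact Or.inr ⟨hμκ.inShape hin, by omega⟩
  · refine iff_of_false ?_ hin
    rintro (h | ⟨h, hlt⟩)
    · exact hin (hlμ.inShape h)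
    · have := glue_eq_of_skew_outer (l := l) (S := S) hν hμ hE ⟨h, hin⟩
      omega

theorem strictPart_glue (hl : IsPartition l) (hν : IsPartition ν) (hμ : IsPartition μ)
    (hlμ : subShape l μ) (hμκ : subShape μ (conj ν)) (hS : IsStrictElegant l μ S)
    (hE : IsElegant (conj μ) ν E) : strictPart l (conj ν) (glue l ν μ S E) = S := by
  funext ⟨i, j⟩
  simp only [strictPart]
  rw [cutShape_glue hl hν hμ hlμ hμκ hS hE]
  by_cases hsk : Skew l μ (i, j)
  · have := glue_eq_of_skew_inner (ν := ν) (E := E) hS hsk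
    rw [if_pos hsk]
    omega
  · rw [if_neg hsk, hS.1 _ hsk]

theorem elegantPart_glue (hl : IsPartition l) (hν : IsPartition ν) (hμ : IsPartition μ)
    (hlμ : subShape l μ) (hμκ : subShape μ (conj ν)) (hS : IsStrictElegant l μ S)
    (hE : IsElegant (conj μ) ν E) : elegantPart l ν (glue l ν μ S E) = E := by
  funext ⟨a, b⟩
  simp only [elegantPart]
  rw [cutShape_glue hl hν hμ hlμ hμκ hS hE]
  by_cases hsk : Skew (conj μ) ν (a, b)
  · have := glue_eq_of_skew_outer (l := l) (S := S) hν hμ hE ((skew_conj_iff hμ hν a b).mp hsk)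
    rw [if_pos hsk]
    omega
  · rw [if_neg hsk, hE.1 _ hsk]

end Glue

theorem finite_setOf_support_subset_of_le {α : Type*} (s : Finset α) (B : ℕ) :
    {F : α → ℕ | (∀ b ∉ s, F b = 0) ∧ ∀ b, F b ≤ B}.Finite := by
  refine Set.Finite.of_finite_image (f := fun F (b : s) => F b) ?_ fun F hF G hG h => ?_
  · refine (Set.Finite.pi (t := fun _ : s => Set.Iic B) fun _ => Set.finite_Iic B).subset ?_
    rintro _ ⟨F, hF, rfl⟩ b -
    exact hF.2 b
  · funext b
    by_cases hb : b ∈ s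
    · exact congrFun h ⟨b, hb⟩
    · rw [hF.1 b hb, hG.1 b hb]

theorem IsStrictElegant.isElegant {μ l : List ℕ} {F : ℕ × ℕ → ℕ} (h : IsStrictElegant μ l F) :
    IsElegant μ l F :=
  ⟨h.1, h.2.1, fun i j h₁ h₂ => (h.2.2.1 i j h₁ h₂).le, h.2.2.2⟩

theorem finite_setOf_isElegant (μ l : List ℕ) : {F | IsElegant μ l F}.Finite := by
  refine (finite_setOf_support_subset_of_le (shapeFinset l) l.length).subset fun F hF => ?_
  refine ⟨fun b hb => hF.1 b fun hsk => hb ((mem_shapeFinset l b).mpr hsk.1), fun b => ?_⟩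
  by_cases hsk : Skew μ l b
  · exact (hF.2.1 b hsk).2.trans hsk.1.1.le
  · exact (hF.1 b hsk).trans_le (Nat.zero_le _)

theorem finite_setOf_isStrictElegant (μ l : List ℕ) : {F | IsStrictElegant μ l F}.Finite :=
  (finite_setOf_isElegant μ l).subset fun _ => IsStrictElegant.isElegant

def intermediateShapes (l ν : List ℕ) : Set (List ℕ) :=
  {μ | IsPartition μ ∧ subShape l μ ∧ subShape (conj μ) ν}

theorem finite_intermediateShapes (l : List ℕ) {ν : List ℕ} (hν : IsPartition ν) :
    (intermediateShapes l ν).Finite := by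
  refine ((List.finite_length_le (Fin (ν.length + 1)) (conj ν).length).image
    (List.map Fin.val)).subset ?_
  rintro μ ⟨hμ, -, hμν⟩
  have hμκ := (subShape_conj_iff hμ hν).mp hμν
  have hle : ∀ x ∈ μ, x < ν.length + 1 := fun x hx => by
    obtain ⟨k, hk, rfl⟩ := List.mem_iff_getElem.mp hx
    have := hμκ k
    rw [List.getD_eq_getElem _ _ hk, hν.getD_conj] at this
    have := List.countP_le_length (p := fun a => decide (k < a)) (l := ν)
    omega
  exact ⟨μ.pmap (fun x hx => ⟨x, hx⟩) hle, by simpa using hμ.length_le_of_subShape hμκ,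
    by simp [List.map_pmap]⟩

def fillingPairs (l ν μ : List ℕ) : Set ((ℕ × ℕ → ℕ) × (ℕ × ℕ → ℕ)) :=
  {S | IsStrictElegant l μ S} ×ˢ {E | IsElegant (conj μ) ν E}

theorem ncard_fillingPairs (l ν μ : List ℕ) :
    (fillingPairs l ν μ).ncard = rENum l μ * fENum (conj μ) ν :=
  Set.ncard_prod

theorem finite_fillingPairs (l ν μ : List ℕ) : (fillingPairs l ν μ).Finite :=
  (finite_setOf_isStrictElegant l μ).prod (finite_setOf_isElegant (conj μ) ν)

theorem Set.ncard_sigma {ι : Type*} {α : ι → Type*} {s : Set ι} {t : ∀ i, Set (α i)}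
    (hs : s.Finite) (ht : ∀ i, (t i).Finite) :
    (s.sigma t).ncard = ∑ i ∈ hs.toFinset, (t i).ncard := by
  have : s.sigma t = ↑(hs.toFinset.sigma fun i => (ht i).toFinset) := by
    ext; simp
  rw [this, Set.ncard_coe_finset, Finset.card_sigma]
  exact Finset.sum_congr rfl fun i _ => (Set.ncard_eq_toFinset_card _ (ht i)).symm

theorem bijOn_glue {l ν : List ℕ} (hl : IsPartition l) (hν : IsPartition ν)
    (h : subShape l (conj ν)) :
    Set.BijOn (fun x : Σ _ : List ℕ, (ℕ × ℕ → ℕ) × (ℕ × ℕ → ℕ) => glue l ν x.1 x.2.1 x.2.2)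
      ((intermediateShapes l ν).sigma (fillingPairs l ν)) {F | IsRPP l (conj ν) F} := by
  refine Set.InvOn.bijOn (f' := fun F =>
      ⟨cutShape l (conj ν) F, strictPart l (conj ν) F, elegantPart l ν F⟩)
    ⟨fun ⟨μ, S, E⟩ ⟨⟨hμ, hlμ, hμν⟩, hS, hE⟩ => ?_, fun F hF => ?_⟩
    (fun ⟨μ, S, E⟩ ⟨⟨hμ, hlμ, hμν⟩, hS, hE⟩ => ?_) fun F hF => ?_
  · have hμκ := (subShape_conj_iff hμ hν).mp hμν
    dsimp only
    rw [strictPart_glue hl hν hμ hlμ hμκ hS hE, elegantPart_glue hl hν hμ hlμ hμκ hS hE,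
      cutShape_glue hl hν hμ hlμ hμκ hS hE]
  · exact IsRPP.glue_strictPart_elegantPart hl hν hF
  · exact isRPP_glue hl hν hμ hlμ ((subShape_conj_iff hμ hν).mp hμν) hS hE
  · have hμ := isPartition_cutShape hl hν.conj hF
    refine ⟨⟨hμ, subShape_cutShape hl hν.conj hF, (subShape_conj_iff hμ hν).mpr ?_⟩,
      hF.isStrictElegant_strictPart hl hν.conj, hF.isElegant_elegantPart hl hν⟩
    exact cutShape_subShape hl hν.conj h hF

theorem tsum_indic_eq_sum {α M : Type*} [AddCommMonoid M] [TopologicalSpace M] {s : Set α}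
    (hs : s.Finite) (g : α → M) :
    ∑' x, indic (x ∈ s) (g x) = ∑ x ∈ hs.toFinset, g x := by
  rw [tsum_eq_sum (s := hs.toFinset)]
  · exact Finset.sum_congr rfl fun x hx => if_pos (by simpa using hx)
  · exact fun x hx => if_neg (by simpa using hx)

theorem stmt10 (l ν : List ℕ) (hl : IsPartition l) (hν : IsPartition ν)
    (h : subShape l (conj ν)) :
    (∑' μ : List ℕ,
      indic (IsPartition μ ∧ subShape l μ ∧ subShape (conj μ) ν)
        (rENum l μ * fENum (conj μ) ν)) = Pnum l (conj ν) := by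
  have hfin := finite_intermediateShapes l hν
  rw [show Pnum l (conj ν) = {F | IsRPP l (conj ν) F}.ncard from if_pos h,
    ← (bijOn_glue hl hν h).ncard_eq, Set.ncard_sigma hfin (finite_fillingPairs l ν)]
  simp only [ncard_fillingPairs]
  exact tsum_indic_eq_sum hfin fun μ => rENum l μ * fENum (conj μ) ν

end
end

section
/- Let u ∈ S_i and v ∈ S_j be permutations and N ≥ 1. The strictly increasing word 1 2 ⋯ N is a multishuffle of u and v[i] if and only if N = i + j, u = 1 2 ⋯ i, and v = 1 2 ⋯ j. Consequently, in MNSym the coproduct satisfies Δ(R̃_{(n)}) = Σ_{i=0}^{n} R̃_{(i)} ⊗ R̃_{(n−i)} (with R̃_{(0)} := 1). -/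
open scoped BigOperators

noncomputable section

open scoped TensorProduct

/-- The composition `(k)` with one part (`∅` if `k = 0`, with `R̃_∅ = 1`). -/
def oneComp (k : ℕ) : List ℕ := if k = 0 then [] else [k]

/-! A multiword of a strictly increasing word `w` is `w` itself, being an increasing
word with the same letters. So in a multishuffle `1 2 ⋯ N` of `u` and `v[i]`
both `u` and `v[i]` are subwords of `1 2 ⋯ N`, hence increasing, and an increasing permutation
is the identity; since the alphabets of `u` and `v[i]` are disjoint, their lengths add up to `N`.
In the coproduct of `R̃_{(n)}` only the pairs `(1 ⋯ i, 1 ⋯ (n - i))` survive, and the descent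
composition of `1 ⋯ k` is `(k)`. -/

theorem IsMultiword.refl (l : List ℕ) : IsMultiword l l :=
  ⟨id, monotone_id, Function.surjective_id, fun _ => rfl⟩

theorem IsMultiword.eq_of_pairwise_lt {w a : List ℕ} (hw : w.Pairwise (· < ·))
    (h : IsMultiword w a) : a = w := by
  obtain ⟨t, ht, hsurj, hget⟩ := h
  have ha : a.Pairwise (· < ·) := by
    refine List.pairwise_iff_get.mpr fun p q hpq => ?_
    obtain ⟨j, rfl⟩ := hsurj p
    obtain ⟨k, rfl⟩ := hsurj q
    rw [← hget, ← hget]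
    exact List.pairwise_iff_get.mp hw j k (lt_of_not_ge fun hkj => hpq.not_ge (ht hkj))
  have hmem : ∀ x, x ∈ a ↔ x ∈ w := by
    intro x
    simp only [List.mem_iff_get]
    constructor
    · rintro ⟨p, rfl⟩
      obtain ⟨j, rfl⟩ := hsurj p
      exact ⟨j, hget j⟩
    · rintro ⟨j, rfl⟩
      exact ⟨t j, (hget j).symm⟩
  exact ((List.perm_ext_iff_of_nodup ha.nodup hw.nodup).mpr hmem).eq_of_pairwise
    (fun _ _ _ _ h₁ h₂ => absurd h₁ h₂.asymm) ha hw

theorem IsMultishuffle.length_eq {w a b : List ℕ} (hw : w.Pairwise (· < ·))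
    (hab : a.Disjoint b) (h : IsMultishuffle w a b) : w.length = a.length + b.length := by
  obtain ⟨-, hcover, ha, hb⟩ := h
  have hfilter : w.filter (fun x => !decide (x ∈ a)) = w.filter fun x => decide (x ∈ b) :=
    List.filter_congr fun x hx => by
      rcases hcover x hx with hxa | hxb
      · simp [hxa, List.disjoint_left.mp hab hxa]
      · simp [hxb, List.disjoint_right.mp hab hxb]
  rw [List.length_eq_length_filter_add (fun x => decide (x ∈ a)), hfilter,
    ← ha.eq_of_pairwise_lt (hw.filter _), ← hb.eq_of_pairwise_lt (hw.filter _)]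

theorem isMultishuffle_append {a b : List ℕ} (hab : a.Disjoint b)
    (hchain : (a ++ b).IsChain (· ≠ ·)) : IsMultishuffle (a ++ b) a b := by
  refine ⟨hchain, fun x hx => List.mem_append.mp hx, ?_, ?_⟩
  · convert IsMultiword.refl a
    rw [List.filter_append, List.filter_eq_self.mpr (by simp),
      List.filter_eq_nil_iff.mpr fun x hxb hxa => hab (of_decide_eq_true hxa) hxb, List.append_nil]
  · convert IsMultiword.refl b
    rw [List.filter_append, (List.filter_eq_self (l := b)).mpr (by simp),
      List.filter_eq_nil_iff.mpr fun x hxa hxb => hab hxa (of_decide_eq_true hxb), List.nil_append]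

theorem length_idWord (n : ℕ) : (idWord n).length = n := List.length_range'

theorem mem_idWord {x n : ℕ} : x ∈ idWord n ↔ 1 ≤ x ∧ x ≤ n := by
  rw [idWord, List.mem_range'_1]
  omega

theorem pairwise_lt_idWord (n : ℕ) : (idWord n).Pairwise (· < ·) := List.pairwise_lt_range'

theorem idWord_add (i j : ℕ) : idWord (i + j) = idWord i ++ shiftWord i (idWord j) := by
  simp [idWord, shiftWord, ← List.range'_append, add_comm, List.map_add_range']

theorem descComp_range' (s k : ℕ) : descComp (List.range' s k) = oneComp k := by
  induction k generalizing s with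
  | zero => rfl
  | succ k ih =>
    cases k with
    | zero => rfl
    | succ k =>
      rw [List.range'_succ]
      simp only [descComp, ih]
      simp [List.range'_succ, oneComp]

theorem descComp_idWord (k : ℕ) : descComp (idWord k) = oneComp k := descComp_range' 1 k

theorem IsPermWord.eq_idWord_of_pairwise_lt {u : List ℕ} (hu : IsPermWord u)
    (hs : u.Pairwise (· < ·)) : u = idWord u.length := by
  refine List.Perm.eq_of_pairwise (fun _ _ _ _ h₁ h₂ => absurd h₁ h₂.asymm) hs
    (pairwise_lt_idWord _) ?_
  exact (hu.1.subperm fun x hx => mem_idWord.mpr (hu.2 x hx)).perm_of_length_le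
    (length_idWord _).le

theorem IsPermWord.disjoint_shiftWord {u v : List ℕ} (hu : IsPermWord u) (hv : IsPermWord v) :
    u.Disjoint (shiftWord u.length v) := fun x hxu hxv => by
  obtain ⟨y, hy, rfl⟩ := List.mem_map.mp hxv
  have := (hu.2 _ hxu).2
  have := (hv.2 y hy).1
  omega

theorem isMultishuffle_idWord_iff {N : ℕ} {u v : List ℕ} (hu : IsPermWord u)
    (hv : IsPermWord v) :
    IsMultishuffle (idWord N) u (shiftWord u.length v) ↔
      N = u.length + v.length ∧ u = idWord u.length ∧ v = idWord v.length := by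
  have hdisj := hu.disjoint_shiftWord hv
  constructor
  · intro h
    have hw := pairwise_lt_idWord N
    have hu' : u.Pairwise (· < ·) := h.2.2.1.eq_of_pairwise_lt (hw.filter _) ▸ hw.filter _
    have hv' : (shiftWord u.length v).Pairwise (· < ·) :=
      h.2.2.2.eq_of_pairwise_lt (hw.filter _) ▸ hw.filter _
    rw [shiftWord, List.pairwise_map] at hv'
    refine ⟨?_, hu.eq_idWord_of_pairwise_lt hu',
      hv.eq_idWord_of_pairwise_lt (hv'.imp Nat.lt_of_add_lt_add_right)⟩
    simpa [length_idWord, shiftWord] using h.length_eq hw hdisj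
  · rintro ⟨rfl, hu', hv'⟩
    have hchain := ((pairwise_lt_idWord (u.length + v.length)).imp ne_of_lt).isChain
    rw [idWord_add, ← hu', ← hv'] at hchain ⊢
    exact isMultishuffle_append hdisj hchain

theorem mem_allPerms {n : ℕ} {u : List ℕ} : u ∈ allPerms n ↔ ∃ i ≤ n, u.Perm (idWord i) := by
  simp [allPerms, permWords, List.mem_permutations]

theorem idWord_mem_allPerms {n i : ℕ} (h : i ≤ n) : idWord i ∈ allPerms n :=
  mem_allPerms.mpr ⟨i, h, List.Perm.refl _⟩

theorem IsPermWord.of_mem_allPerms {n : ℕ} {u : List ℕ} (h : u ∈ allPerms n) : IsPermWord u := by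
  obtain ⟨i, -, hp⟩ := mem_allPerms.mp h
  refine ⟨hp.nodup_iff.mpr (pairwise_lt_idWord i).nodup, fun x hx => ?_⟩
  rw [hp.length_eq, length_idWord]
  exact mem_idWord.mp (hp.mem_iff.mp hx)

open Classical in
theorem filter_isMultishuffle_allPerms (n : ℕ) :
    (allPerms n ×ˢ allPerms n).filter
        (fun p => IsMultishuffle (idWord n) p.1 (shiftWord p.1.length p.2)) =
      (Finset.range (n + 1)).image fun i => (idWord i, idWord (n - i)) := by
  ext ⟨u, v⟩
  simp only [Finset.mem_filter, Finset.mem_product, Finset.mem_image, Finset.mem_range,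
    Nat.lt_succ_iff, Prod.mk.injEq]
  constructor
  · rintro ⟨⟨hu, hv⟩, h⟩
    obtain ⟨hn, hu', hv'⟩ :=
      (isMultishuffle_idWord_iff (.of_mem_allPerms hu) (.of_mem_allPerms hv)).mp h
    exact ⟨u.length, by omega, hu'.symm, by rw [hv', hn, Nat.add_sub_cancel_left]⟩
  · rintro ⟨i, hi, rfl, rfl⟩
    have hu := idWord_mem_allPerms hi
    have hv := idWord_mem_allPerms (Nat.sub_le n i)
    refine ⟨⟨hu, hv⟩, (isMultishuffle_idWord_iff (.of_mem_allPerms hu)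
      (.of_mem_allPerms hv)).mpr ⟨?_, ?_, ?_⟩⟩ <;> simp only [length_idWord]
    omega

theorem stmt14 :
    (∀ (N : ℕ) (u v : List ℕ), 1 ≤ N → IsPermWord u → IsPermWord v →
      (IsMultishuffle (idWord N) u (shiftWord u.length v) ↔
        (N = u.length + v.length ∧ u = idWord u.length ∧ v = idWord v.length))) ∧
    (∀ n : ℕ, 1 ≤ n →
      (∑ u ∈ allPerms n, ∑ v ∈ allPerms n,
        indic (IsMultishuffle (idWord n) u (shiftWord u.length v))
          ((Rt (descComp u)) ⊗ₜ[ℤ] (Rt (descComp v))))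
        = ∑ i ∈ Finset.range (n + 1),
            (Rt (oneComp i)) ⊗ₜ[ℤ] (Rt (oneComp (n - i)))) := by
  refine ⟨fun N u v _ hu hv => isMultishuffle_idWord_iff hu hv, fun n _ => ?_⟩
  classical
  have hinj : Set.InjOn (fun i => (idWord i, idWord (n - i))) (Finset.range (n + 1)) :=
    fun i _ j _ h => by simpa [length_idWord] using congrArg (fun p => p.1.length) h
  calc _ = ∑ p ∈ (allPerms n ×ˢ allPerms n).filter
          (fun p => IsMultishuffle (idWord n) p.1 (shiftWord p.1.length p.2)),
          Rt (descComp p.1) ⊗ₜ[ℤ] Rt (descComp p.2) := by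
        rw [Finset.sum_filter, ← Finset.sum_product']
        rfl
    _ = _ := by
        rw [filter_isMultishuffle_allPerms, Finset.sum_image hinj]
        simp only [descComp_idWord]

end
end
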